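/- Let σ > 0, γ ∈ [0,1], κ ∈ ℝ, T ≥ 1, m ∈ ℝ^T, and let α ≥ 2 be an integer. Then the Rényi divergence of order α between the T-dimensional mixture γ·N(κ·m, σ²·I_T) + (1−γ)·N(0, σ²·I_T) and N(0, σ²·I_T) equals the corresponding one-dimensional quantity with shift κ·‖m‖_2; explicitly, D_α( γ·N(κm, σ²I_T) + (1−γ)·N(0, σ²I_T) ‖ N(0, σ²I_T) ) = (1/(α−1)) · log( Σ_{ℓ=0}^{α} C(α,ℓ) · (1−γ)^{α−ℓ} · γ^ℓ · exp( ℓ(ℓ−1)·κ²·‖m‖_2² / (2σ²) ) ). -/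

import Mathlib

/-! Under `N(0, v)`, the density of `N(μ, v)` is `exp (μ x / v - μ² / 2v)`, whose `k`-th moment is
`exp (k (k - 1) μ² / 2v)`. In dimension `T` the density of `N(m, v I)` is the product of the
coordinate densities, so its moments multiply into `exp (k (k - 1) ‖m‖² / 2v)`. The density of the
mixture `γ N(m, v I) + (1 - γ) N(0, v I)` is `γ D + (1 - γ)`, and expanding its `α`-th power with
the binomial theorem gives the formula. -/

open MeasureTheory ProbabilityTheory Real
open scoped ENNReal NNReal Classical

/-- Rényi divergence of order `a` between measures `μ` and `ν`:
`(a-1)⁻¹ * log ∫ (dμ/dν)^a dν`, set to `⊤` when `μ` is not absolutely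
continuous with respect to `ν`. -/
noncomputable def renyiDiv {E : Type*} [MeasurableSpace E] (a : ℝ) (μ ν : Measure E) : EReal :=
  if μ ≪ ν then (((a - 1)⁻¹ : ℝ) : EReal) * ENNReal.log (∫⁻ x, (μ.rnDeriv ν x) ^ a ∂ν)
  else ⊤

/-- Bernoulli(γ) distribution on ℝ, supported on {0, 1}. -/
noncomputable def bern (γ : ℝ) : Measure ℝ :=
  ENNReal.ofReal γ • Measure.dirac 1 + ENNReal.ofReal (1 - γ) • Measure.dirac 0

section Pi

variable {n : ℕ} {E : Type*} [MeasurableSpace E] (ν : Fin n → Measure E) [∀ i, SigmaFinite (ν i)]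

theorem MeasureTheory.lintegral_pi_prod (f : Fin n → E → ℝ≥0∞) (hf : ∀ i, Measurable (f i)) :
    ∫⁻ x, ∏ i, f i (x i) ∂Measure.pi ν = ∏ i, ∫⁻ y, f i y ∂ν i := by
  induction n with
  | zero => simp
  | succ n ih =>
    rw [← (measurePreserving_piFinSuccAbove ν 0).symm.lintegral_comp_emb
      (MeasurableEquiv.measurableEmbedding _)]
    simp_rw [MeasurableEquiv.piFinSuccAbove_symm_apply, Fin.insertNthEquiv,
      Fin.prod_univ_succ, Fin.insertNth_zero, Equiv.coe_fn_mk, Fin.cons_succ,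
      Fin.zero_succAbove, Fin.cons_zero, cast_eq]
    rw [lintegral_prod_mul (f := f 0) (g := fun y : Fin n → E => ∏ i, f i.succ (y i))
      (hf 0).aemeasurable
      (Finset.measurable_prod _ fun i _ => (hf i.succ).comp (measurable_pi_apply i)).aemeasurable,
      ih _ _ fun i => hf i.succ]

theorem MeasureTheory.Measure.pi_withDensity (d : Fin n → E → ℝ≥0∞) (hd : ∀ i, Measurable (d i))
    [∀ i, SigmaFinite ((ν i).withDensity (d i))] :
    Measure.pi (fun i => (ν i).withDensity (d i)) =
      (Measure.pi ν).withDensity (fun x => ∏ i, d i (x i)) := by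
  refine Measure.pi_eq fun s hs => ?_
  rw [withDensity_apply _ (MeasurableSet.univ_pi hs), Measure.restrict_pi_pi,
    lintegral_pi_prod _ _ hd]
  exact Finset.prod_congr rfl fun i _ => (withDensity_apply _ (hs i)).symm

end Pi

section Gaussian

noncomputable def gaussianShiftDensity (μ : ℝ) (v : ℝ≥0) (x : ℝ) : ℝ≥0∞ :=
  ENNReal.ofReal (rexp (μ / v * x - μ ^ 2 / (2 * v)))

@[fun_prop]
theorem measurable_gaussianShiftDensity (μ : ℝ) (v : ℝ≥0) :
    Measurable (gaussianShiftDensity μ v) := by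
  unfold gaussianShiftDensity
  fun_prop

theorem gaussianReal_eq_withDensity_gaussianShiftDensity (μ : ℝ) {v : ℝ≥0} (hv : v ≠ 0) :
    gaussianReal μ v = (gaussianReal 0 v).withDensity (gaussianShiftDensity μ v) := by
  have hv' : (0 : ℝ) < v := by positivity
  rw [gaussianReal_of_var_ne_zero μ hv, gaussianReal_of_var_ne_zero 0 hv,
    ← withDensity_mul _ (measurable_gaussianPDF 0 v) (measurable_gaussianShiftDensity μ v)]
  congr 1
  ext x
  simp only [Pi.mul_apply, gaussianPDF, gaussianPDFReal, gaussianShiftDensity]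
  rw [← ENNReal.ofReal_mul (by positivity)]
  congr 1
  rw [mul_assoc _ (rexp _), ← Real.exp_add]
  congr 2
  field_simp
  ring

theorem lintegral_ofReal_exp_gaussianReal (μ : ℝ) (v : ℝ≥0) (c d : ℝ) :
    ∫⁻ x, ENNReal.ofReal (rexp (c * x + d)) ∂gaussianReal μ v =
      ENNReal.ofReal (rexp (c * μ + v * c ^ 2 / 2 + d)) := by
  simp_rw [Real.exp_add _ d]
  rw [← ofReal_integral_eq_lintegral_ofReal
      ((integrable_exp_mul_gaussianReal c).mul_const _) (ae_of_all _ fun _ => by positivity),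
    integral_mul_const]
  have hmgf := congrFun (mgf_fun_id_gaussianReal (μ := μ) (v := v)) c
  rw [mgf] at hmgf
  rw [hmgf, mul_comm μ]

theorem lintegral_gaussianShiftDensity_pow (μ : ℝ) (v : ℝ≥0) (k : ℕ) :
    ∫⁻ x, gaussianShiftDensity μ v x ^ k ∂gaussianReal 0 v =
      ENNReal.ofReal (rexp (k * (k - 1) * μ ^ 2 / (2 * v))) := by
  have hpow : ∀ x, gaussianShiftDensity μ v x ^ k =
      ENNReal.ofReal (rexp (k * μ / v * x + -(k * μ ^ 2 / (2 * v)))) := by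
    intro x
    rw [gaussianShiftDensity, ← ENNReal.ofReal_pow (Real.exp_nonneg _), ← Real.exp_nat_mul]
    ring_nf
  simp_rw [hpow]
  rw [lintegral_ofReal_exp_gaussianReal]
  congr 2
  rcases eq_or_ne (v : ℝ) 0 with hv | hv
  · simp [hv]
  · field_simp
    ring

end Gaussian

section GaussianPi

variable {n : ℕ}

theorem pi_gaussianReal_eq_withDensity (μ : Fin n → ℝ) {v : ℝ≥0} (hv : v ≠ 0) :
    Measure.pi (fun i => gaussianReal (μ i) v) =
      (Measure.pi fun _ : Fin n => gaussianReal 0 v).withDensity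
        (fun x => ∏ i, gaussianShiftDensity (μ i) v (x i)) := by
  have hshift i := gaussianReal_eq_withDensity_gaussianShiftDensity (μ i) hv
  have (i : Fin n) : SigmaFinite ((gaussianReal 0 v).withDensity (gaussianShiftDensity (μ i) v)) :=
    hshift i ▸ inferInstance
  simp_rw [hshift]
  exact Measure.pi_withDensity _ _ fun i => measurable_gaussianShiftDensity _ _

theorem lintegral_pi_gaussianShiftDensity_pow (μ : Fin n → ℝ) (v : ℝ≥0) (k : ℕ) :
    ∫⁻ x, (∏ i, gaussianShiftDensity (μ i) v (x i)) ^ k ∂Measure.pi (fun _ => gaussianReal 0 v) =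
      ENNReal.ofReal (rexp (k * (k - 1) * (∑ i, μ i ^ 2) / (2 * v))) := by
  simp_rw [← Finset.prod_pow]
  rw [lintegral_pi_prod _ _ fun i => (measurable_gaussianShiftDensity _ _).pow_const k]
  simp_rw [lintegral_gaussianShiftDensity_pow]
  rw [← ENNReal.ofReal_prod_of_nonneg fun _ _ => (Real.exp_nonneg _), ← Real.exp_sum,
    Finset.mul_sum, Finset.sum_div]

end GaussianPi

section Mixture

variable {E : Type*} [MeasurableSpace E] {ν : Measure E} {D : E → ℝ≥0∞}

theorem renyiDiv_withDensity [SigmaFinite ν] (hD : Measurable D) (a : ℝ) :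
    renyiDiv a (ν.withDensity D) ν = ((a - 1)⁻¹ : ℝ) * ENNReal.log (∫⁻ x, D x ^ a ∂ν) := by
  rw [renyiDiv, if_pos (withDensity_absolutelyContinuous _ _),
    lintegral_congr_ae ((Measure.rnDeriv_withDensity ν hD).mono fun x hx => by rw [hx])]

theorem smul_withDensity_add_smul (hD : Measurable D) (p q : ℝ≥0∞) :
    p • ν.withDensity D + q • ν = ν.withDensity (fun x => p * D x + q) := by
  rw [← withDensity_smul _ hD, ← withDensity_const, ← withDensity_add_left (hD.const_smul _)]
  rfl

theorem lintegral_mixture_pow (hD : Measurable D) {γ : ℝ} (hγ0 : 0 ≤ γ) (hγ1 : γ ≤ 1)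
    (M : ℕ → ℝ) (hM0 : ∀ ℓ, 0 ≤ M ℓ) (hM : ∀ ℓ, ∫⁻ x, D x ^ ℓ ∂ν = ENNReal.ofReal (M ℓ))
    (α : ℕ) :
    ∫⁻ x, (ENNReal.ofReal γ * D x + ENNReal.ofReal (1 - γ)) ^ α ∂ν =
      ENNReal.ofReal (∑ ℓ ∈ Finset.range (α + 1),
        α.choose ℓ * (1 - γ) ^ (α - ℓ) * γ ^ ℓ * M ℓ) := by
  have h1γ : 0 ≤ 1 - γ := sub_nonneg.mpr hγ1
  have hterm (ℓ : ℕ) (x : E) : (ENNReal.ofReal γ * D x) ^ ℓ * ENNReal.ofReal (1 - γ) ^ (α - ℓ) *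
      α.choose ℓ = ENNReal.ofReal (α.choose ℓ * (1 - γ) ^ (α - ℓ) * γ ^ ℓ) * D x ^ ℓ := by
    rw [ENNReal.ofReal_mul (by positivity), ENNReal.ofReal_mul (by positivity),
      ENNReal.ofReal_pow h1γ, ENNReal.ofReal_pow hγ0, ENNReal.ofReal_natCast]
    ring
  simp_rw [add_pow, hterm]
  rw [lintegral_finsetSum _ fun ℓ _ => (hD.pow_const ℓ).const_mul _,
    ENNReal.ofReal_sum_of_nonneg fun ℓ _ => mul_nonneg (by positivity) (hM0 ℓ)]
  refine Finset.sum_congr rfl fun ℓ _ => ?_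
  rw [lintegral_const_mul _ (hD.pow_const ℓ), hM, ← ENNReal.ofReal_mul (by positivity)]

theorem one_le_sum_choose_mul_of_one_le {γ : ℝ} (hγ0 : 0 ≤ γ) (hγ1 : γ ≤ 1) {w : ℕ → ℝ}
    (hw : ∀ ℓ, 1 ≤ w ℓ) (α : ℕ) :
    1 ≤ ∑ ℓ ∈ Finset.range (α + 1), α.choose ℓ * (1 - γ) ^ (α - ℓ) * γ ^ ℓ * w ℓ := by
  have h1γ : 0 ≤ 1 - γ := sub_nonneg.mpr hγ1
  calc (1 : ℝ) = (γ + (1 - γ)) ^ α := by simp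
    _ = ∑ ℓ ∈ Finset.range (α + 1), α.choose ℓ * (1 - γ) ^ (α - ℓ) * γ ^ ℓ * 1 := by
      rw [add_pow]
      exact Finset.sum_congr rfl fun ℓ _ => by ring
    _ ≤ _ := Finset.sum_le_sum fun ℓ _ =>
      mul_le_mul_of_nonneg_left (hw ℓ) (by positivity)

end Mixture

theorem renyi_div_sparsified_gaussian_multidim_shift_general
    (σ γ κ : ℝ) (hσ : 0 < σ) (hγ0 : 0 ≤ γ) (hγ1 : γ ≤ 1)
    (T : ℕ) (m : Fin T → ℝ)
    (α : ℕ) :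
    renyiDiv (α : ℝ)
      (ENNReal.ofReal γ • (Measure.pi fun t => gaussianReal (κ * m t) (Real.toNNReal (σ ^ 2))) +
        ENNReal.ofReal (1 - γ) • (Measure.pi fun _ : Fin T => gaussianReal 0 (Real.toNNReal (σ ^ 2))))
      (Measure.pi fun _ : Fin T => gaussianReal 0 (Real.toNNReal (σ ^ 2))) =
    ((((α : ℝ) - 1)⁻¹ * Real.log (∑ ℓ ∈ Finset.range (α + 1),
        (α.choose ℓ : ℝ) * (1 - γ) ^ (α - ℓ) * γ ^ ℓ *
          Real.exp ((ℓ : ℝ) * ((ℓ : ℝ) - 1) * κ ^ 2 * (∑ t, m t ^ 2) / (2 * σ ^ 2))) : ℝ) : EReal) := by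
  set v := Real.toNNReal (σ ^ 2)
  have hvσ : (v : ℝ) = σ ^ 2 := Real.coe_toNNReal _ (by positivity)
  have hv : v ≠ 0 := by
    rw [← NNReal.coe_ne_zero, hvσ]
    positivity
  set M : ℕ → ℝ := fun ℓ => rexp (ℓ * (ℓ - 1) * κ ^ 2 * (∑ t, m t ^ 2) / (2 * σ ^ 2))
  have hmoment (ℓ : ℕ) : ∫⁻ x, (∏ t, gaussianShiftDensity (κ * m t) v (x t)) ^ ℓ
      ∂Measure.pi (fun _ => gaussianReal 0 v) = ENNReal.ofReal (M ℓ) := by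
    simp only [lintegral_pi_gaussianShiftDensity_pow, hvσ, M, mul_pow, ← Finset.mul_sum]
    ring_nf
  have hM1 (ℓ : ℕ) : 1 ≤ M ℓ := by
    refine Real.one_le_exp (div_nonneg (mul_nonneg (mul_nonneg ?_ (sq_nonneg κ))
      (Finset.sum_nonneg fun t _ => sq_nonneg (m t))) (by positivity))
    rcases ℓ with _ | ℓ
    · simp
    · rw [Nat.cast_succ, add_sub_cancel_right]
      positivity
  rw [pi_gaussianReal_eq_withDensity _ hv, smul_withDensity_add_smul (by fun_prop),
    renyiDiv_withDensity (by fun_prop)]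
  simp_rw [ENNReal.rpow_natCast]
  rw [lintegral_mixture_pow (by fun_prop) hγ0 hγ1 M (fun ℓ => (Real.exp_pos _).le) hmoment,
    ENNReal.log_ofReal_of_pos
      (zero_lt_one.trans_le (one_le_sum_choose_mul_of_one_le hγ0 hγ1 hM1 α)), EReal.coe_mul]

theorem renyi_div_sparsified_gaussian_multidim_shift
    (σ γ κ : ℝ) (hσ : 0 < σ) (hγ0 : 0 ≤ γ) (hγ1 : γ ≤ 1)
    (T : ℕ) (hT : 1 ≤ T) (m : Fin T → ℝ)
    (α : ℕ) (hα : 2 ≤ α) :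
    renyiDiv (α : ℝ)
      (ENNReal.ofReal γ • (Measure.pi fun t => gaussianReal (κ * m t) (Real.toNNReal (σ ^ 2))) +
        ENNReal.ofReal (1 - γ) • (Measure.pi fun _ : Fin T => gaussianReal 0 (Real.toNNReal (σ ^ 2))))
      (Measure.pi fun _ : Fin T => gaussianReal 0 (Real.toNNReal (σ ^ 2))) =
    ((((α : ℝ) - 1)⁻¹ * Real.log (∑ ℓ ∈ Finset.range (α + 1),
        (α.choose ℓ : ℝ) * (1 - γ) ^ (α - ℓ) * γ ^ ℓ *
          Real.exp ((ℓ : ℝ) * ((ℓ : ℝ) - 1) * κ ^ 2 * (∑ t, m t ^ 2) / (2 * σ ^ 2))) : ℝ) : EReal) :=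
  renyi_div_sparsified_gaussian_multidim_shift_general σ γ κ hσ hγ0 hγ1 T m α
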